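/- If H is a ⋆-semi-forest of a weighted oriented graph D, with associated sets W₁, W₂ and H̃, then V(H) ⊆ N_D(W₁) ∪ N_D⁺(W₂ ∪ H̃). -/

import Mathlib

/-! ## Weighted oriented graphs -/

/-- A weighted oriented graph `D = (G, 𝒪, w)`: an orientation of a finite simple
graph together with a weight function, where sources have weight `1`. -/
structure WOGraph (V : Type) where
  /-- the set of directed edges -/
  E : V → V → Prop
  irrefl : ∀ x, ¬ E x x
  asymm : ∀ x y, E x y → ¬ E y x
  /-- the weight function -/
  w : V → ℕ
  w_pos : ∀ x, 1 ≤ w x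
  source_one : ∀ x, (∀ y, ¬ E y x) → w x = 1

namespace WOGraph

variable {V : Type}

/-- The underlying simple graph `G` of `D`. -/
def graph (D : WOGraph V) : SimpleGraph V := SimpleGraph.fromRel D.E

/-- Out-neighbourhood `N⁺_D(x)`. -/
def outN (D : WOGraph V) (x : V) : Set V := {y | D.E x y}

/-- In-neighbourhood `N⁻_D(x)`. -/
def inN (D : WOGraph V) (x : V) : Set V := {y | D.E y x}

/-- Neighbourhood `N_D(x)`. -/
def nbr (D : WOGraph V) (x : V) : Set V := {y | D.E x y ∨ D.E y x}

/-- `N_D(A)` for a set `A` of vertices. -/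
def nbrS (D : WOGraph V) (A : Set V) : Set V := {y | ∃ a ∈ A, y ∈ D.nbr a}

/-- `N⁺_D(A)` for a set `A` of vertices. -/
def outNS (D : WOGraph V) (A : Set V) : Set V := {y | ∃ a ∈ A, D.E a y}

/-- `V⁺`, the set of vertices of weight `> 1`. -/
def Vplus (D : WOGraph V) : Set V := {x | 1 < D.w x}

/-- A vertex cover of `D`. -/
def IsVC (D : WOGraph V) (C : Set V) : Prop := ∀ u v, D.E u v → u ∈ C ∨ v ∈ C

/-- `L₁(C)`. -/
def L1 (D : WOGraph V) (C : Set V) : Set V := {x | x ∈ C ∧ ∃ y, D.E x y ∧ y ∉ C}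

/-- `L₂(C)`. -/
def L2 (D : WOGraph V) (C : Set V) : Set V :=
  {x | x ∈ C ∧ x ∉ D.L1 C ∧ ∃ y, D.E y x ∧ y ∉ C}

/-- `L₃(C)`. -/
def L3 (D : WOGraph V) (C : Set V) : Set V := {x | x ∈ C ∧ x ∉ D.L1 C ∧ x ∉ D.L2 C}

/-- A strong vertex cover of `D`. -/
def IsStrongVC (D : WOGraph V) (C : Set V) : Prop :=
  D.IsVC C ∧ ∀ x ∈ D.L3 C, ∃ y, D.E y x ∧ y ∈ C ∧ y ∉ D.L1 C ∧ 1 < D.w y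

/-- A weighted oriented subgraph of `D`. -/
structure OSub (D : WOGraph V) where
  verts : Set V
  E : V → V → Prop
  sub : ∀ u v, E u v → D.E u v
  memL : ∀ u v, E u v → u ∈ verts
  memR : ∀ u v, E u v → v ∈ verts

namespace OSub

variable {D : WOGraph V}

/-- The underlying simple graph of a weighted oriented subgraph. -/
def graph (H : D.OSub) : SimpleGraph V := SimpleGraph.fromRel H.E

/-- Neighbourhood inside the subgraph. -/
def nbr (H : D.OSub) (x : V) : Set V := {y | H.E x y ∨ H.E y x}

/-- Degree inside the subgraph. -/
noncomputable def deg (H : D.OSub) (x : V) : ℕ := (H.nbr x).ncard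

/-- `H` is contained in `K`. -/
def le (H K : D.OSub) : Prop := H.verts ⊆ K.verts ∧ ∀ u v, H.E u v → K.E u v

end OSub

/-- The induced weighted oriented subgraph on a set `A` of vertices. -/
def induced (D : WOGraph V) (A : Set V) : D.OSub where
  verts := A
  E u v := D.E u v ∧ u ∈ A ∧ v ∈ A
  sub _ _ h := h.1
  memL _ _ h := h.2.1
  memR _ _ h := h.2.2

/-- `K` is an induced weighted oriented subgraph of `D`. -/
def IsInducedSub {D : WOGraph V} (K : D.OSub) : Prop :=
  ∀ u v, D.E u v → u ∈ K.verts → v ∈ K.verts → K.E u v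

/-- A root oriented tree (ROT) with parent `v`. -/
def IsROT (D : WOGraph V) (T : D.OSub) (v : V) : Prop :=
  v ∈ T.verts ∧ T.graph.IsAcyclic ∧
  (∀ x ∈ T.verts, Relation.ReflTransGen T.E v x) ∧
  (∀ x ∈ T.verts, D.w x = 1 → (T.deg x = 1 ∧ x ≠ v) ∨ (T.verts = {v} ∧ x = v))

/-- A unicycle oriented subgraph whose (unique) cycle has vertex set `Cs`. -/
def IsUnicycle (D : WOGraph V) (B : D.OSub) (Cs : Set V) : Prop :=
  (∃ (n : ℕ) (f : ZMod n → V), 3 ≤ n ∧ Function.Injective f ∧ Set.range f = Cs ∧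
      ∀ i, B.E (f i) (f (i + 1))) ∧
  (∀ (a : V) (p : B.graph.Walk a a), p.IsCycle → {x | x ∈ p.support} = Cs) ∧
  (∀ y ∈ B.verts, y ∉ Cs → ∃ x ∈ Cs, Relation.ReflTransGen B.E x y) ∧
  (∀ x ∈ B.verts, D.w x = 1 → B.deg x = 1)

/-- A `⋆`-semi-forest structure on a weighted oriented subgraph `H` of `D`. -/
structure SSF (D : WOGraph V) (H : D.OSub) where
  r : ℕ
  s : ℕ
  T : Fin r → D.OSub
  parent : Fin r → V
  B : Fin s → D.OSub
  Cs : Fin s → Set V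
  hT : ∀ i, D.IsROT (T i) (parent i)
  hB : ∀ j, D.IsUnicycle (B j) (Cs j)
  hverts : H.verts = (⋃ i, (T i).verts) ∪ (⋃ j, (B j).verts)
  hE : ∀ u v, H.E u v ↔ ((∃ i, (T i).E u v) ∨ (∃ j, (B j).E u v))
  hTT : ∀ i i', i ≠ i' → Disjoint (T i).verts (T i').verts
  hBB : ∀ j j', j ≠ j' → Disjoint (B j).verts (B j').verts
  hTB : ∀ i j, Disjoint (T i).verts (B j).verts
  wv : Fin r → V
  hwv_not : ∀ i, wv i ∉ H.verts
  hwv_nbr : ∀ i, wv i ∈ D.nbr (parent i)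
  W1 : Set V
  W2 : Set V
  hW_union : W1 ∪ W2 = Set.range wv
  hW_disj : Disjoint W1 W2
  hW1_stable : ∀ x ∈ W1, ∀ y ∈ W1, ¬ D.graph.Adj x y
  hW2_plus : W2 ⊆ D.Vplus
  hW2_edge : ∀ i, wv i ∈ W2 → D.E (wv i) (parent i)
  hW1_out : D.outNS (W2 ∪ ({x | x ∈ H.verts ∧ 2 ≤ H.deg x} ∪
      {x | (∃ i, parent i = x) ∧ H.deg x = 1})) ∩ W1 = ∅

/-- The set `H̃` associated with a `⋆`-semi-forest. -/
noncomputable def SSF.tilde {D : WOGraph V} {H : D.OSub} (F : D.SSF H) : Set V :=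
  {x | x ∈ H.verts ∧ 2 ≤ H.deg x} ∪ {x | (∃ i, F.parent i = x) ∧ H.deg x = 1}

/-- `K` has a generating `⋆`-semi-forest. -/
def HasGenSSF (D : WOGraph V) (K : D.OSub) : Prop :=
  ∃ H : D.OSub, Nonempty (D.SSF H) ∧ H.verts = K.verts

/-- The `⋆`-condition for a 5-tuple `(a', a, b, b', c)` written along an induced 5-cycle. -/
def StarCond (D : WOGraph V) (a' a b b' c : V) : Prop :=
  (D.E a' a ∧ D.w a' = 1) ∧
  (D.inN a ⊆ D.nbr c ∧ D.inN a ∩ D.Vplus ⊆ D.inN c) ∧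
  (D.nbr b' ⊆ D.nbr a' ∪ D.outN a ∧ D.inN b' ∩ D.Vplus ⊆ D.inN a')

/-- The `⋆`-property for an induced 5-cycle `z 0, z 1, z 2, z 3, z 4`. -/
def HasStarProp (D : WOGraph V) (z : Fin 5 → V) : Prop :=
  ∀ i : Fin 5,
    (D.E (z i) (z (i + 1)) ∧ 1 < D.w (z i) →
      StarCond D (z (i - 1)) (z i) (z (i + 1)) (z (i + 2)) (z (i + 3))) ∧
    (D.E (z (i + 1)) (z i) ∧ 1 < D.w (z (i + 1)) →
      StarCond D (z (i + 2)) (z (i + 1)) (z i) (z (i - 1)) (z (i - 2)))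

/-- The edge ideal `I(D)` of a weighted oriented graph in `k[x_v : v ∈ V]`. -/
noncomputable def edgeIdeal (k : Type) [Field k] (D : WOGraph V) : Ideal (MvPolynomial V k) :=
  Ideal.span {f | ∃ u v, D.E u v ∧ f = MvPolynomial.X u * MvPolynomial.X v ^ D.w v}

end WOGraph

/-! ## Generic graph notions -/

/-- A vertex cover of a simple graph. -/
def gVC {W : Type} (G : SimpleGraph W) (C : Set W) : Prop :=
  ∀ u v, G.Adj u v → u ∈ C ∨ v ∈ C

/-- The vertex cover number `τ(G)`. -/
noncomputable def tau {W : Type} (G : SimpleGraph W) : ℕ :=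
  sInf {n | ∃ C : Set W, gVC G C ∧ C.ncard = n}

/-- A stable (independent) set. -/
def Stable {W : Type} (G : SimpleGraph W) (S : Set W) : Prop :=
  ∀ x ∈ S, ∀ y ∈ S, ¬ G.Adj x y

/-- `G` is well-covered: all maximal stable sets have the same cardinality. -/
def WellCovered {W : Type} (G : SimpleGraph W) : Prop :=
  ∀ S T : Set W, Maximal (Stable G) S → Maximal (Stable G) T → S.ncard = T.ncard

/-- `e` is (the vertex set of) an edge of `G`. -/
def IsEdgeSet {W : Type} (G : SimpleGraph W) (e : Set W) : Prop :=
  ∃ u v, G.Adj u v ∧ e = {u, v}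

/-- An edge `e = {b, b'}` has the property (P). -/
def PropP {W : Type} (G : SimpleGraph W) (e : Set W) : Prop :=
  ∀ a b a' b', e = {b, b'} → G.Adj a b → G.Adj a' b' → a ∉ e → a' ∉ e → G.Adj a a'

/-- A matching of `G`, as a set of (vertex sets of) edges. -/
def IsMatchingSet {W : Type} (G : SimpleGraph W) (M : Set (Set W)) : Prop :=
  (∀ e ∈ M, IsEdgeSet G e) ∧ M.Pairwise Disjoint

/-- A perfect matching of `G`. -/
def IsPerfectMatchingSet {W : Type} (G : SimpleGraph W) (M : Set (Set W)) : Prop :=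
  IsMatchingSet G M ∧ ⋃₀ M = Set.univ

/-- The matching number `ν(G)`. -/
noncomputable def nu {W : Type} (G : SimpleGraph W) : ℕ :=
  sSup {n | ∃ M, IsMatchingSet G M ∧ M.ncard = n}

/-- The degree of a vertex. -/
noncomputable def gdeg {W : Type} (G : SimpleGraph W) (x : W) : ℕ := (G.neighborSet x).ncard

/-- `v` is a simplicial vertex: its closed neighbourhood is a clique. -/
def IsSimplicialVtx {W : Type} (G : SimpleGraph W) (v : W) : Prop :=
  G.IsClique (insert v (G.neighborSet v))

/-- The set `S_G` of (vertex sets of) simplexes of `G`. -/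
def SimplexSets {W : Type} (G : SimpleGraph W) : Set (Set W) :=
  {S | ∃ v, IsSimplicialVtx G v ∧ S = insert v (G.neighborSet v)}

/-- `G` is a simplicial graph. -/
def SimplicialGraph {W : Type} (G : SimpleGraph W) : Prop :=
  ∀ v, IsSimplicialVtx G v ∨ ∃ u, G.Adj v u ∧ IsSimplicialVtx G u

/-- The cycle graph on `ZMod n`. -/
def cycGraph (n : ℕ) : SimpleGraph (ZMod n) := SimpleGraph.fromRel (fun i j => j = i + 1)

/-- `G` is chordal: it has no induced cycles of length `≥ 4`. -/
def Chordal {W : Type} (G : SimpleGraph W) : Prop :=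
  ∀ n : ℕ, 4 ≤ n → ∀ A : Set W, IsEmpty (G.induce A ≃g cycGraph n)

/-- `G` has a cycle of length `k`. -/
def HasCycleLen {W : Type} (G : SimpleGraph W) (k : ℕ) : Prop :=
  ∃ (a : W) (p : G.Walk a a), p.IsCycle ∧ p.length = k

/-- `z 0, z 1, z 2, z 3, z 4` is an induced 5-cycle of `G`. -/
def IsInduced5Cycle {W : Type} (G : SimpleGraph W) (z : Fin 5 → W) : Prop :=
  Function.Injective z ∧ ∀ i j : Fin 5, G.Adj (z i) (z j) ↔ (j = i + 1 ∨ i = j + 1)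

/-- A basic 5-cycle: an induced 5-cycle without two adjacent vertices of degree `≥ 3`. -/
def IsBasic5Cycle {W : Type} (G : SimpleGraph W) (z : Fin 5 → W) : Prop :=
  IsInduced5Cycle G z ∧ ∀ i : Fin 5, ¬ (3 ≤ gdeg G (z i) ∧ 3 ≤ gdeg G (z (i + 1)))

/-- The set `C_G` of (vertex sets of) basic 5-cycles of `G`. -/
def Basic5Sets {W : Type} (G : SimpleGraph W) : Set (Set W) :=
  {A | ∃ z : Fin 5 → W, IsBasic5Cycle G z ∧ A = Set.range z}

/-- The clique number `ω(G)`. -/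
noncomputable def cliqueNum' {W : Type} (G : SimpleGraph W) : ℕ :=
  sSup {n | ∃ s : Set W, G.IsClique s ∧ s.ncard = n}

/-- `G` is a perfect graph. -/
def IsPerfectGraph {W : Type} (G : SimpleGraph W) : Prop :=
  ∀ A : Set W, (G.induce A).chromaticNumber = (cliqueNum' (G.induce A) : ℕ∞)

/-- A `τ`-reduction of `G` into the induced subgraphs on the `A i`. -/
noncomputable def TauReduction {W : Type} (G : SimpleGraph W) (s : ℕ) (A : Fin s → Set W) : Prop :=
  (∀ i j, i ≠ j → Disjoint (A i) (A j)) ∧ (⋃ i, A i) = Set.univ ∧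
  tau G = ∑ i, tau (G.induce (A i))

/-- `G` is an SCQ graph witnessed by the matching `Q`. -/
def IsSCQ {V : Type} (D : WOGraph V) (Q : Set (Set V)) : Prop :=
  (Q = ∅ ∨ (IsMatchingSet D.graph Q ∧ ∀ e ∈ Q, PropP D.graph e)) ∧
  (∀ A ∈ SimplexSets D.graph ∪ Basic5Sets D.graph ∪ Q,
    ∀ B ∈ SimplexSets D.graph ∪ Basic5Sets D.graph ∪ Q, A = B ∨ Disjoint A B) ∧
  ⋃₀ (SimplexSets D.graph ∪ Basic5Sets D.graph ∪ Q) = Set.univ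

/-- An ideal is unmixed if all its associated primes have the same height. -/
def IsUnmixed {R : Type} [CommRing R] (I : Ideal R) : Prop :=
  ∀ p q : Ideal R, p ∈ associatedPrimes R (R ⧸ I) → q ∈ associatedPrimes R (R ⧸ I) →
    ∀ (hp : p.IsPrime) (hq : q.IsPrime),
      Order.height (⟨p, hp⟩ : PrimeSpectrum R) = Order.height (⟨q, hq⟩ : PrimeSpectrum R)
/-! ## Concrete graphs -/

/-- The 7-cycle `C₇`. -/
def C7graph : SimpleGraph (ZMod 7) := cycGraph 7

/-- Vertices of `T₁₀`. -/
inductive T10V | v | a1 | a2 | a3 | b1 | b2 | b3 | c1 | c2 | c3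
deriving DecidableEq

instance : Fintype T10V where
  elems := {T10V.v, T10V.a1, T10V.a2, T10V.a3, T10V.b1, T10V.b2, T10V.b3, T10V.c1, T10V.c2, T10V.c3}
  complete x := by cases x <;> decide

open T10V in
/-- The graph `T₁₀`. -/
def T10graph : SimpleGraph T10V := SimpleGraph.fromRel (fun x y =>
  (x, y) ∈ ([(v,a1), (v,a2), (v,a3), (a1,b1), (a2,b2), (a3,b3), (b1,c1), (b2,c2),
    (b3,c3), (c1,c2), (c2,c3), (c3,c1)] : List (T10V × T10V)))

/-- Vertices of `Q₁₃`. -/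
inductive Q13V | a1 | a2 | b1 | b2 | c1 | c2 | d1 | d2 | g1 | g2 | h | h' | v
deriving DecidableEq

instance : Fintype Q13V where
  elems := {Q13V.a1, Q13V.a2, Q13V.b1, Q13V.b2, Q13V.c1, Q13V.c2, Q13V.d1, Q13V.d2, Q13V.g1, Q13V.g2, Q13V.h, Q13V.h', Q13V.v}
  complete x := by cases x <;> decide

open Q13V in
/-- The graph `Q₁₃`. -/
def Q13graph : SimpleGraph Q13V := SimpleGraph.fromRel (fun x y =>
  (x, y) ∈ ([(a1,a2), (a1,d1), (a2,d2), (d1,c1), (d1,g1), (d1,h), (d2,c2), (d2,g2),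
    (d2,h), (g1,b1), (g1,h'), (g2,b2), (g2,h'), (b1,c2), (b2,c1), (h,v),
    (h',v)] : List (Q13V × Q13V)))

/-- Vertices of `P₁₃`. -/
inductive P13V | a1 | a2 | a3 | a4 | b1 | b2 | b3 | b4 | c1 | c2 | d1 | d2 | v
deriving DecidableEq

instance : Fintype P13V where
  elems := {P13V.a1, P13V.a2, P13V.a3, P13V.a4, P13V.b1, P13V.b2, P13V.b3, P13V.b4, P13V.c1, P13V.c2, P13V.d1, P13V.d2, P13V.v}
  complete x := by cases x <;> decide

open P13V in
/-- The graph `P₁₃`. -/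
def P13graph : SimpleGraph P13V := SimpleGraph.fromRel (fun x y =>
  (x, y) ∈ ([(a1,a2), (a1,b1), (a2,b2), (a3,a4), (a3,b3), (a4,b4), (b1,c1), (b2,c1),
    (b3,c2), (b4,c2), (c1,c2), (d1,b1), (d1,b3), (d2,b2), (d2,b4), (v,d1),
    (v,d2)] : List (P13V × P13V)))

/-- Vertices of `P₁₄`. -/
inductive P14V | a1 | a2 | a3 | a4 | a5 | a6 | a7 | b1 | b2 | b3 | b4 | b5 | b6 | b7
deriving DecidableEq

instance : Fintype P14V where
  elems := {P14V.a1, P14V.a2, P14V.a3, P14V.a4, P14V.a5, P14V.a6, P14V.a7, P14V.b1, P14V.b2, P14V.b3, P14V.b4, P14V.b5, P14V.b6, P14V.b7}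
  complete x := by cases x <;> decide

open P14V in
/-- The graph `P₁₄`. -/
def P14graph : SimpleGraph P14V := SimpleGraph.fromRel (fun x y =>
  (x, y) ∈ ([(a1,a2), (a2,a3), (a3,a4), (a4,a5), (a5,a6), (a6,a7), (a7,a1),
    (a1,b1), (a2,b2), (a3,b3), (a4,b4), (a5,b5), (a6,b6), (a7,b7),
    (b1,b3), (b2,b4), (b3,b5), (b4,b6), (b5,b7), (b6,b1), (b7,b2)] : List (P14V × P14V)))

/-- Vertices of `P₁₀`. -/
inductive P10V | a1 | a2 | b1 | b2 | c1 | c2 | d1 | d2 | g1 | g2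
deriving DecidableEq

instance : Fintype P10V where
  elems := {P10V.a1, P10V.a2, P10V.b1, P10V.b2, P10V.c1, P10V.c2, P10V.d1, P10V.d2, P10V.g1, P10V.g2}
  complete x := by cases x <;> decide

open P10V in
/-- The graph `P₁₀`. -/
def P10graph : SimpleGraph P10V := SimpleGraph.fromRel (fun x y =>
  (x, y) ∈ ([(a1,b1), (b1,d2), (d2,d1), (d1,b2), (b2,a2), (a1,g1), (g1,d1), (g1,c1),
    (c1,c2), (c2,g2), (g2,a2), (d2,g2)] : List (P10V × P10V)))
/-! Every vertex of `H` other than a parent has an in-neighbour in `H`, since trees and unicycle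
subgraphs are reached by oriented paths from their root or cycle. A parent `vᵢ` is covered by its
`wᵢ`: through `N_D(W₁)` if `wᵢ ∈ W₁`, and through `N⁺_D(W₂)` since `(wᵢ, vᵢ) ∈ E(D)` if `wᵢ ∈ W₂`.
Any other vertex is an out-neighbour of its in-neighbour `y`, and `y ∈ H̃`: either `deg_H y ≥ 2`,
or `y` has no in-neighbour in `H` (an in- and an out-neighbour already give degree `2`), so `y`
is a parent of degree `1`. -/

lemma Relation.ReflTransGen.exists_rel_of_ne {α : Type*} {r : α → α → Prop} {a b : α}
    (h : Relation.ReflTransGen r a b) (hab : a ≠ b) : ∃ c, r c b := by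
  rcases h.cases_tail with rfl | ⟨c, -, hcb⟩
  · exact absurd rfl hab
  · exact ⟨c, hcb⟩

namespace WOGraph

variable {V : Type} {D : WOGraph V}

namespace OSub

lemma one_le_deg [Finite V] (H : D.OSub) {x y : V} (hxy : H.E x y) : 1 ≤ H.deg x :=
  (Set.ncard_pos (Set.toFinite _)).2 ⟨y, Or.inl hxy⟩

lemma two_le_deg_of_E_of_E [Finite V] (H : D.OSub) {x y z : V} (hxy : H.E x y)
    (hzx : H.E z x) : 2 ≤ H.deg x := by
  have hyz : y ≠ z := by
    rintro rfl
    exact D.asymm x y (H.sub x y hxy) (H.sub y x hzx)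
  exact (Set.one_lt_ncard_iff (Set.toFinite _)).2 ⟨y, z, Or.inl hxy, Or.inr hzx, hyz⟩

end OSub

lemma IsROT.eq_or_exists_E {T : D.OSub} {v x : V} (hT : D.IsROT T v) (hx : x ∈ T.verts) :
    x = v ∨ ∃ y, T.E y x := by
  by_cases hxv : x = v
  · exact Or.inl hxv
  · exact Or.inr ((hT.2.2.1 x hx).exists_rel_of_ne (Ne.symm hxv))

lemma IsUnicycle.exists_E {B : D.OSub} {Cs : Set V} (hB : D.IsUnicycle B Cs) {x : V}
    (hx : x ∈ B.verts) : ∃ y, B.E y x := by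
  obtain ⟨⟨n, f, -, -, hrange, hcycle⟩, -, hreach, -⟩ := hB
  by_cases hxC : x ∈ Cs
  · rw [← hrange] at hxC
    obtain ⟨i, rfl⟩ := hxC
    exact ⟨f (i - 1), by simpa only [sub_add_cancel] using hcycle (i - 1)⟩
  · obtain ⟨c, hc, hcx⟩ := hreach x hx hxC
    exact hcx.exists_rel_of_ne (ne_of_mem_of_not_mem hc hxC)

namespace SSF

variable {H : D.OSub}

lemma exists_parent_eq_or_exists_E (F : D.SSF H) {x : V} (hx : x ∈ H.verts) :
    (∃ i, F.parent i = x) ∨ ∃ y, H.E y x := by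
  rw [F.hverts, Set.mem_union, Set.mem_iUnion, Set.mem_iUnion] at hx
  rcases hx with ⟨i, hi⟩ | ⟨j, hj⟩
  · rcases (F.hT i).eq_or_exists_E hi with rfl | ⟨y, hyx⟩
    · exact Or.inl ⟨i, rfl⟩
    · exact Or.inr ⟨y, (F.hE y _).2 (Or.inl ⟨i, hyx⟩)⟩
  · obtain ⟨y, hyx⟩ := (F.hB j).exists_E hj
    exact Or.inr ⟨y, (F.hE y x).2 (Or.inr ⟨j, hyx⟩)⟩

lemma mem_tilde_of_E [Finite V] (F : D.SSF H) {x y : V} (hyx : H.E y x) : y ∈ F.tilde := by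
  have hyH : y ∈ H.verts := H.memL y x hyx
  by_cases h2 : 2 ≤ H.deg y
  · exact Or.inl ⟨hyH, h2⟩
  · have hdeg : H.deg y = 1 := by have := H.one_le_deg hyx; omega
    rcases F.exists_parent_eq_or_exists_E hyH with hparent | ⟨z, hzy⟩
    · exact Or.inr ⟨hparent, hdeg⟩
    · exact absurd (H.two_le_deg_of_E_of_E hyx hzy) h2

lemma parent_mem_nbrS_union_outNS (F : D.SSF H) (i : Fin F.r) :
    F.parent i ∈ D.nbrS F.W1 ∪ D.outNS (F.W2 ∪ F.tilde) := by
  have hw : F.wv i ∈ F.W1 ∪ F.W2 := F.hW_union ▸ Set.mem_range_self i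
  rcases hw with hw1 | hw2
  · exact Or.inl ⟨F.wv i, hw1, (F.hwv_nbr i).symm⟩
  · exact Or.inr ⟨F.wv i, Or.inl hw2, F.hW2_edge i hw2⟩

end SSF

end WOGraph

/-- Lemma `lemma-oct16`. -/
theorem stmt1 {V : Type} [Fintype V] (D : WOGraph V) (H : D.OSub) (F : D.SSF H) :
    H.verts ⊆ D.nbrS F.W1 ∪ D.outNS (F.W2 ∪ F.tilde) := by
  intro x hx
  rcases F.exists_parent_eq_or_exists_E hx with ⟨i, rfl⟩ | ⟨y, hyx⟩
  · exact F.parent_mem_nbrS_union_outNS i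
  · exact Or.inr ⟨y, Or.inr (F.mem_tilde_of_E hyx), H.sub y x hyx⟩
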